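/- Main spectral gap comparison (Theorem 4.2): assume K_CG(σ,σ') = A(σ,σ') B(σ,σ') K_c(σ,σ') for all σ ≠ σ' with 0 < A(σ,σ') ≤ 1, A★ := inf_{σ≠σ'} A(σ,σ') > 0, and 0 < γ_low ≤ B(σ,σ') ≤ γ_high for all σ ≠ σ'. Then the spectral gaps satisfy A★ · γ_low · λ(K_c) ≤ λ(K_CG) ≤ γ_high · λ(K_c), where λ(K) = inf{E_K(f,f)/Var_μ(f) : f : Σ → ℝ, Var_μ(f) ≠ 0}, E_K(f,f) = (1/2)∑_{σ,σ'} |f(σ)−f(σ')|² K(σ,σ') μ(σ), and Var_μ(f) = (1/2)∑_{σ,σ'} |f(σ)−f(σ')|² μ(σ)μ(σ'). -/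

import Mathlib

/-!
Off the diagonal `A★ γ_low K_c ≤ K_CG ≤ γ_high K_c`, and diagonal entries do not contribute to a
Dirichlet form, so the same bounds hold between `E_{K_c}(f,f)` and `E_{K_CG}(f,f)` for every `f`.
Dividing by `Var_μ(f) ≥ 0` and taking infima transfers them to the spectral gaps.
-/

open Finset

/-- `E_K(f,f)`; the variance `Var_μ(f)` is the case `K σ σ' = μ σ'`. -/
noncomputable def dirichletForm {S : Type*} [Fintype S] (μ : S → ℝ) (K : S → S → ℝ)
    (f : S → ℝ) : ℝ :=
  (1 / 2) * ∑ σ, ∑ σ', |f σ - f σ'| ^ 2 * K σ σ' * μ σ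

/-- The spectral gap `inf {E f / V f : V f ≠ 0}`, which is `0` (as `sInf ∅`) when `V` vanishes
identically. -/
noncomputable def rayleighInf {X : Type*} (E V : X → ℝ) : ℝ :=
  sInf {r : ℝ | ∃ f, V f ≠ 0 ∧ r = E f / V f}

section DirichletForm

variable {S : Type*} [Fintype S] {μ : S → ℝ}

theorem dirichletForm_nonneg (hμ : ∀ σ, 0 ≤ μ σ) {K : S → S → ℝ} (hK : ∀ σ σ', 0 ≤ K σ σ')
    (f : S → ℝ) : 0 ≤ dirichletForm μ K f :=
  mul_nonneg (by norm_num) <| sum_nonneg fun σ _ => sum_nonneg fun σ' _ =>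
    mul_nonneg (mul_nonneg (sq_nonneg _) (hK σ σ')) (hμ σ)

theorem mul_dirichletForm_le_mul (hμ : ∀ σ, 0 ≤ μ σ) {K K' : S → S → ℝ} {c d : ℝ}
    (hKK' : ∀ σ σ', σ ≠ σ' → c * K σ σ' ≤ d * K' σ σ') (f : S → ℝ) :
    c * dirichletForm μ K f ≤ d * dirichletForm μ K' f := by
  have hterm : ∀ σ σ', c * (|f σ - f σ'| ^ 2 * K σ σ' * μ σ) ≤
      d * (|f σ - f σ'| ^ 2 * K' σ σ' * μ σ) := by
    intro σ σ'
    rcases eq_or_ne σ σ' with rfl | hne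
    · simp
    · calc c * (|f σ - f σ'| ^ 2 * K σ σ' * μ σ) = |f σ - f σ'| ^ 2 * (c * K σ σ') * μ σ := by
            ring
        _ ≤ |f σ - f σ'| ^ 2 * (d * K' σ σ') * μ σ :=
            mul_le_mul_of_nonneg_right
              (mul_le_mul_of_nonneg_left (hKK' σ σ' hne) (sq_nonneg _)) (hμ σ)
        _ = d * (|f σ - f σ'| ^ 2 * K' σ σ' * μ σ) := by ring
  unfold dirichletForm
  rw [mul_left_comm c, mul_left_comm d]
  refine mul_le_mul_of_nonneg_left ?_ (by norm_num)
  simp only [mul_sum]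
  exact sum_le_sum fun σ _ => sum_le_sum fun σ' _ => hterm σ σ'

end DirichletForm

theorem mul_rayleighInf_le {X : Type*} {E E' V : X → ℝ} {c : ℝ} (hc : 0 ≤ c)
    (hE : ∀ f, 0 ≤ E f) (hV : ∀ f, 0 ≤ V f) (hEE' : ∀ f, c * E f ≤ E' f) :
    c * rayleighInf E V ≤ rayleighInf E' V := by
  by_cases hadm : ∃ f, V f ≠ 0
  · obtain ⟨f₀, hf₀⟩ := hadm
    have hbdd : BddBelow {r : ℝ | ∃ f, V f ≠ 0 ∧ r = E f / V f} :=
      ⟨0, by rintro _ ⟨f, -, rfl⟩; exact div_nonneg (hE f) (hV f)⟩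
    refine le_csInf ⟨_, f₀, hf₀, rfl⟩ ?_
    rintro _ ⟨f, hf, rfl⟩
    calc c * rayleighInf E V ≤ c * (E f / V f) :=
          mul_le_mul_of_nonneg_left (csInf_le hbdd ⟨f, hf, rfl⟩) hc
      _ = c * E f / V f := (mul_div_assoc _ _ _).symm
      _ ≤ E' f / V f := div_le_div_of_nonneg_right (hEE' f) (hV f)
  · push Not at hadm
    simp [rayleighInf, hadm]

theorem sInf_offDiag_le {S : Type*} [Finite S] (A : S → S → ℝ) {a b : S} (hab : a ≠ b) :
    sInf {x : ℝ | ∃ a b : S, a ≠ b ∧ A a b = x} ≤ A a b :=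
  csInf_le ((Set.finite_range (Function.uncurry A)).bddBelow.mono
    (by rintro _ ⟨a, b, -, rfl⟩; exact ⟨(a, b), rfl⟩)) ⟨a, b, hab, rfl⟩

theorem two_level_CGMC_spectral_gap_general
    {S : Type*} [Fintype S]
    (μ : S → ℝ) (hμpos : ∀ σ, 0 < μ σ)
    (Kc KCG : S → S → ℝ)
    (hKcnn : ∀ σ σ', 0 ≤ Kc σ σ') (hKCGnn : ∀ σ σ', 0 ≤ KCG σ σ')
    (A B : S → S → ℝ)
    (hfac : ∀ σ σ', σ ≠ σ' → KCG σ σ' = A σ σ' * B σ σ' * Kc σ σ')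
    (hA : ∀ σ σ', σ ≠ σ' → 0 < A σ σ' ∧ A σ σ' ≤ 1)
    (Astar : ℝ) (hAstar : Astar = sInf {x : ℝ | ∃ a b : S, a ≠ b ∧ A a b = x})
    (hAstarpos : 0 < Astar)
    (γlo γhi : ℝ) (hγlo : 0 < γlo) (hγ : γlo ≤ γhi)
    (hB : ∀ σ σ', σ ≠ σ' → γlo ≤ B σ σ' ∧ B σ σ' ≤ γhi)
    (EKc EKCG V : (S → ℝ) → ℝ)
    (hEKc : ∀ f, EKc f = (1 / 2) * ∑ σ, ∑ σ', |f σ - f σ'| ^ 2 * Kc σ σ' * μ σ)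
    (hEKCG : ∀ f, EKCG f =
      (1 / 2) * ∑ σ, ∑ σ', |f σ - f σ'| ^ 2 * KCG σ σ' * μ σ)
    (hV : ∀ f, V f = (1 / 2) * ∑ σ, ∑ σ', |f σ - f σ'| ^ 2 * μ σ * μ σ')
    (lamKc lamKCG : ℝ)
    (hlamKc : lamKc = sInf {r : ℝ | ∃ f : S → ℝ, V f ≠ 0 ∧ r = EKc f / V f})
    (hlamKCG : lamKCG =
      sInf {r : ℝ | ∃ f : S → ℝ, V f ≠ 0 ∧ r = EKCG f / V f}) :
    Astar * γlo * lamKc ≤ lamKCG ∧ lamKCG ≤ γhi * lamKc := by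
  have hμ : ∀ σ, 0 ≤ μ σ := fun σ => (hμpos σ).le
  have hγhi : 0 < γhi := hγlo.trans_le hγ
  obtain rfl : EKc = dirichletForm μ Kc := funext hEKc
  obtain rfl : EKCG = dirichletForm μ KCG := funext hEKCG
  have hVnn : ∀ f, 0 ≤ V f := fun f => by
    have hVD : V f = dirichletForm μ (fun _ σ' => μ σ') f := by
      rw [hV, dirichletForm]
      exact congrArg _ (sum_congr rfl fun σ _ => sum_congr rfl fun σ' _ => mul_right_comm _ _ _)
    exact hVD ▸ dirichletForm_nonneg hμ (fun _ σ' => hμ σ') f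
  have hlow : ∀ f, Astar * γlo * dirichletForm μ Kc f ≤ dirichletForm μ KCG f := fun f => by
    refine (mul_dirichletForm_le_mul hμ (d := 1) (fun σ σ' hne => ?_) f).trans_eq (one_mul _)
    rw [hfac σ σ' hne, one_mul]
    have hAσ : Astar ≤ A σ σ' := hAstar.trans_le (sInf_offDiag_le A hne)
    exact mul_le_mul_of_nonneg_right
      (mul_le_mul hAσ (hB σ σ' hne).1 hγlo.le (hA σ σ' hne).1.le) (hKcnn σ σ')
  have hhigh : ∀ f, dirichletForm μ KCG f ≤ γhi * dirichletForm μ Kc f := fun f => by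
    refine (one_mul _).symm.trans_le (mul_dirichletForm_le_mul hμ (fun σ σ' hne => ?_) f)
    rw [hfac σ σ' hne, one_mul]
    have hAB : A σ σ' * B σ σ' ≤ 1 * γhi :=
      mul_le_mul (hA σ σ' hne).2 (hB σ σ' hne).2 (hγlo.le.trans (hB σ σ' hne).1) zero_le_one
    exact mul_le_mul_of_nonneg_right (hAB.trans_eq (one_mul γhi)) (hKcnn σ σ')
  subst hlamKc hlamKCG
  refine ⟨mul_rayleighInf_le (by positivity) (dirichletForm_nonneg hμ hKcnn) hVnn hlow, ?_⟩
  refine (inv_mul_le_iff₀ hγhi).1 (mul_rayleighInf_le (inv_nonneg.2 hγhi.le)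
    (dirichletForm_nonneg hμ hKCGnn) hVnn fun f => ?_)
  exact (inv_mul_le_iff₀ hγhi).2 (hhigh f)

/-- Main spectral gap comparison (Theorem 4.2):
`A★ · γ_low · λ(K_c) ≤ λ(K_CG) ≤ γ_high · λ(K_c)`. -/
theorem two_level_CGMC_spectral_gap
    {S : Type*} [Fintype S] [Nonempty S] (hcard : 2 ≤ Fintype.card S)
    (μ : S → ℝ) (hμpos : ∀ σ, 0 < μ σ) (hμsum : ∑ σ, μ σ = 1)
    (Kc KCG : S → S → ℝ)
    (hKcnn : ∀ σ σ', 0 ≤ Kc σ σ') (hKCGnn : ∀ σ σ', 0 ≤ KCG σ σ')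
    (hstatKc : ∀ σ', ∑ σ, μ σ * Kc σ σ' = μ σ')
    (hstatKCG : ∀ σ', ∑ σ, μ σ * KCG σ σ' = μ σ')
    (A B : S → S → ℝ)
    (hfac : ∀ σ σ', σ ≠ σ' → KCG σ σ' = A σ σ' * B σ σ' * Kc σ σ')
    (hA : ∀ σ σ', σ ≠ σ' → 0 < A σ σ' ∧ A σ σ' ≤ 1)
    (Astar : ℝ) (hAstar : Astar = sInf {x : ℝ | ∃ a b : S, a ≠ b ∧ A a b = x})
    (hAstarpos : 0 < Astar)
    (γlo γhi : ℝ) (hγlo : 0 < γlo) (hγ : γlo ≤ γhi)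
    (hB : ∀ σ σ', σ ≠ σ' → γlo ≤ B σ σ' ∧ B σ σ' ≤ γhi)
    (EKc EKCG V : (S → ℝ) → ℝ)
    (hEKc : ∀ f, EKc f = (1 / 2) * ∑ σ, ∑ σ', |f σ - f σ'| ^ 2 * Kc σ σ' * μ σ)
    (hEKCG : ∀ f, EKCG f =
      (1 / 2) * ∑ σ, ∑ σ', |f σ - f σ'| ^ 2 * KCG σ σ' * μ σ)
    (hV : ∀ f, V f = (1 / 2) * ∑ σ, ∑ σ', |f σ - f σ'| ^ 2 * μ σ * μ σ')
    (lamKc lamKCG : ℝ)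
    (hlamKc : lamKc = sInf {r : ℝ | ∃ f : S → ℝ, V f ≠ 0 ∧ r = EKc f / V f})
    (hlamKCG : lamKCG =
      sInf {r : ℝ | ∃ f : S → ℝ, V f ≠ 0 ∧ r = EKCG f / V f}) :
    Astar * γlo * lamKc ≤ lamKCG ∧ lamKCG ≤ γhi * lamKc :=
  two_level_CGMC_spectral_gap_general μ hμpos Kc KCG hKcnn hKCGnn A B hfac hA Astar hAstar hAstarpos
    γlo γhi hγlo hγ hB EKc EKCG V hEKc hEKCG hV lamKc lamKCG hlamKc hlamKCG
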